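/- arXiv:2007.07183 — 3 statements merged into one kernel-verified Lean document; each statement's English description precedes it below -/
import Mathlib

section
/- Let M1 and M2 be two perfect matchings of the same finite self-contained bipartite graph G = (V, F, E), and for k = 1, 2 let 𝒮_k be the set of strongly connected components of the marginalized oriented graph of G with respect to M_k. Then the two families of clusters coincide: {S ∪ M1(S) : S ∈ 𝒮_1} = {S ∪ M2(S) : S ∈ 𝒮_2}. -/
variable {F V : Type*} [Fintype F] [Fintype V] [DecidableEq F] [DecidableEq V]

/-- `M` is a matching of the bipartite graph with edge set `E`. -/
def IsMatching (E M : Finset (F × V)) : Prop :=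
  M ⊆ E ∧ (∀ e ∈ M, ∀ e' ∈ M, e.1 = e'.1 → e = e') ∧
    ∀ e ∈ M, ∀ e' ∈ M, e.2 = e'.2 → e = e'

/-- `M` is a perfect matching: a matching covering every vertex of `F` and of `V`. -/
def IsPerfectMatching (E M : Finset (F × V)) : Prop :=
  IsMatching E M ∧ (∀ f : F, ∃ v, (f, v) ∈ M) ∧ ∀ v : V, ∃ f, (f, v) ∈ M

/-- Set-valued adjacency of `S ⊆ F` restricted to the vertex set `V'`. -/
def subAdjSet (E : Finset (F × V)) (V' : Set V) (S : Set F) : Set V :=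
  {v | v ∈ V' ∧ ∃ f ∈ S, (f, v) ∈ E}

/-- `S` is a self-contained set of the subgraph with variable part `V'`. -/
def SCSetOn (E : Finset (F × V)) (V' : Set V) (S : Set F) : Prop :=
  S.ncard = (subAdjSet E V' S).ncard ∧ ∀ S' ⊆ S, S'.ncard ≤ (subAdjSet E V' S').ncard

/-- The subgraph induced by `F'` and `V'` is self-contained. -/
def SCGraphOn (E : Finset (F × V)) (F' : Set F) (V' : Set V) : Prop :=
  F'.ncard = V'.ncard ∧ SCSetOn E V' F'

/-- Edge relation of the marginalized oriented graph with respect to `M`. -/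
def margEdge (E M : Finset (F × V)) (v v' : V) : Prop :=
  v ≠ v' ∧ ∃ f : F, (f, v') ∈ M ∧ (f, v) ∈ E ∧ (f, v) ∉ M

/-- Reachability in the marginalized oriented graph. -/
def margReach (E M : Finset (F × V)) : V → V → Prop :=
  Relation.ReflTransGen (margEdge E M)

/-- `C` is a strongly connected component of the marginalized oriented graph. -/
def IsSCC (E M : Finset (F × V)) (C : Set V) : Prop :=
  ∃ v : V, C = {w | margReach E M v w ∧ margReach E M w v}

/-- `M(X)`: the set of vertices of `F` matched by `M` to vertices of `X ⊆ V`. -/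
def matchedF (M : Finset (F × V)) (X : Set V) : Set F :=
  {f | ∃ v ∈ X, (f, v) ∈ M}

/-- The cluster `S ∪ M(S)` of a strongly connected component `S ⊆ V`,
as a subset of `F ⊕ V`. -/
def sccClusterSum (M : Finset (F × V)) (C : Set V) : Set (F ⊕ V) :=
  (Sum.inr '' C) ∪ (Sum.inl '' matchedF M C)

section Aux

variable {F V : Type*} [Fintype F] [Fintype V] [DecidableEq F] [DecidableEq V]

/-- Key lemma: if `f` is matched to `v` by `M₁` and to `w` by `M₂`, then `v` and `w`
lie in the same strongly connected component of the marginalized graph w.r.t. `M₂`. -/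
lemma partner_reach (E M₁ M₂ : Finset (F × V))
    (h₁ : IsPerfectMatching E M₁) (h₂ : IsPerfectMatching E M₂)
    {f : F} {v w : V} (hv : (f, v) ∈ M₁) (hw : (f, w) ∈ M₂) :
    margReach E M₂ v w ∧ margReach E M₂ w v := by
  classical
  -- m1 u : the M₁-partner of u
  have hm1 : ∀ u : V, ∃ g : F, (g, u) ∈ M₁ := h₁.2.2
  set m1 : V → F := fun u => Classical.choose (hm1 u) with hm1def
  have hm1mem : ∀ u, (m1 u, u) ∈ M₁ := fun u => Classical.choose_spec (hm1 u)
  have hφex : ∀ u : V, ∃ z : V, (m1 u, z) ∈ M₂ := fun u => h₂.2.1 (m1 u)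
  set φ : V → V := fun u => Classical.choose (hφex u) with hφdef
  have hφmem : ∀ u, (m1 u, φ u) ∈ M₂ := fun u => Classical.choose_spec (hφex u)
  -- φ is injective
  have hφinj : Function.Injective φ := by
    intro a b hab
    have h2 := h₂.1.2.2 (m1 a, φ a) (hφmem a) (m1 b, φ b) (hφmem b) (by simpa using hab)
    have : m1 a = m1 b := congrArg Prod.fst h2
    have h1 := h₁.1.2.1 (m1 a, a) (hm1mem a) (m1 b, b) (hm1mem b) this
    exact congrArg Prod.snd h1
  -- single step: u reaches φ u
  have step : ∀ u : V, margReach E M₂ u (φ u) := by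
    intro u
    by_cases h : φ u = u
    · rw [h]; exact Relation.ReflTransGen.refl
    · refine Relation.ReflTransGen.single ⟨fun he => h he.symm, m1 u, hφmem u, h₁.1.1 (hm1mem u), ?_⟩
      intro hmem
      exact h (congrArg Prod.snd (h₂.1.2.1 (m1 u, φ u) (hφmem u) (m1 u, u) hmem rfl))
  have iter : ∀ (n : ℕ) (u : V), margReach E M₂ u (φ^[n] u) := by
    intro n
    induction n with
    | zero => intro u; exact Relation.ReflTransGen.refl
    | succ k ih =>
      intro u
      rw [Function.iterate_succ_apply']
      exact Relation.ReflTransGen.trans (ih u) (step (φ^[k] u))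
  -- φ as a permutation; some positive iterate is the identity
  have hφbij : Function.Bijective φ := Finite.injective_iff_bijective.mp hφinj
  set e : Equiv.Perm V := Equiv.ofBijective φ hφbij with hedef
  have hepow : ∀ (k : ℕ) (u : V), (e ^ k) u = φ^[k] u := by
    intro k
    induction k with
    | zero => intro u; simp
    | succ j ih =>
      intro u
      rw [pow_succ, Equiv.Perm.mul_apply, Function.iterate_succ_apply]
      exact ih (φ u)
  have hord : 0 < orderOf e := orderOf_pos e
  have hfix : ∀ u : V, φ^[orderOf e] u = u := by
    intro u
    rw [← hepow]
    rw [pow_orderOf_eq_one e]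
    rfl
  have back : ∀ u : V, margReach E M₂ (φ u) u := by
    intro u
    have := iter (orderOf e - 1) (φ u)
    rwa [← Function.iterate_succ_apply, Nat.succ_eq_add_one, Nat.sub_add_cancel hord, hfix u] at this
  -- identify f and w with m1 v and φ v
  have hmv : m1 v = f :=
    congrArg Prod.fst (h₁.1.2.2 (m1 v, v) (hm1mem v) (f, v) hv rfl)
  have hwv : φ v = w := by
    have := hφmem v
    rw [hmv] at this
    exact congrArg Prod.snd (h₂.1.2.1 (f, φ v) this (f, w) hw rfl)
  exact ⟨hwv ▸ step v, hwv ▸ back v⟩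

lemma reach_mono (E M₁ M₂ : Finset (F × V))
    (h₁ : IsPerfectMatching E M₁) (h₂ : IsPerfectMatching E M₂)
    {v w : V} (h : margReach E M₁ v w) : margReach E M₂ v w := by
  induction h with
  | refl => exact Relation.ReflTransGen.refl
  | tail hab hedge ih =>
    rename_i b c
    obtain ⟨hne, f, hfc, hfbE, hfbM⟩ := hedge
    obtain ⟨z, hz⟩ := h₂.2.1 f
    have hbz : margReach E M₂ b z := by
      by_cases hbz' : b = z
      · rw [hbz']; exact Relation.ReflTransGen.refl
      · refine Relation.ReflTransGen.single ⟨hbz', f, hz, hfbE, ?_⟩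
        intro hmem
        exact hbz' (congrArg Prod.snd (h₂.1.2.1 (f, b) hmem (f, z) hz rfl))
    have hzc := (partner_reach E M₁ M₂ h₁ h₂ hfc hz).2
    exact Relation.ReflTransGen.trans ih (Relation.ReflTransGen.trans hbz hzc)

lemma reach_eq (E M₁ M₂ : Finset (F × V))
    (h₁ : IsPerfectMatching E M₁) (h₂ : IsPerfectMatching E M₂) :
    margReach E M₁ = margReach E M₂ := by
  ext v w
  exact ⟨reach_mono E M₁ M₂ h₁ h₂, reach_mono E M₂ M₁ h₂ h₁⟩

lemma cluster_subset (E M₁ M₂ : Finset (F × V))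
    (h₁ : IsPerfectMatching E M₁) (h₂ : IsPerfectMatching E M₂) :
    {X : Set (F ⊕ V) | ∃ C : Set V, IsSCC E M₁ C ∧ X = sccClusterSum M₁ C} ⊆
      {X : Set (F ⊕ V) | ∃ C : Set V, IsSCC E M₂ C ∧ X = sccClusterSum M₂ C} := by
  rintro X ⟨C, ⟨v₀, hC⟩, rfl⟩
  have hre := reach_eq E M₁ M₂ h₁ h₂
  refine ⟨C, ⟨v₀, by rw [hC, hre]⟩, ?_⟩
  have hmf : matchedF M₁ C = matchedF M₂ C := by
    ext f
    constructor
    · rintro ⟨v, hvC, hvM⟩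
      obtain ⟨w, hw⟩ := h₂.2.1 f
      have hp := partner_reach E M₁ M₂ h₁ h₂ hvM hw
      refine ⟨w, ?_, hw⟩
      rw [hC] at hvC ⊢
      exact ⟨reach_mono E M₂ M₁ h₂ h₁
          (Relation.ReflTransGen.trans (reach_mono E M₁ M₂ h₁ h₂ hvC.1) hp.1),
        reach_mono E M₂ M₁ h₂ h₁
          (Relation.ReflTransGen.trans hp.2 (reach_mono E M₁ M₂ h₁ h₂ hvC.2))⟩
    · rintro ⟨w, hwC, hwM⟩
      obtain ⟨v, hv⟩ := h₁.2.1 f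
      have hp := partner_reach E M₂ M₁ h₂ h₁ hwM hv
      refine ⟨v, ?_, hv⟩
      rw [hC] at hwC ⊢
      exact ⟨Relation.ReflTransGen.trans hwC.1 hp.1,
        Relation.ReflTransGen.trans hp.2 hwC.2⟩
  rw [sccClusterSum, sccClusterSum, hmf]

end Aux

/-- for two perfect matchings `M₁` and `M₂` of the same finite
self-contained bipartite graph, the families of clusters
`{S ∪ Mₖ(S) : S an SCC of the marginalized oriented graph w.r.t. Mₖ}` coincide. -/
theorem scc_clusters_independent_of_perfect_matching (E M₁ M₂ : Finset (F × V))
    (hG : SCGraphOn E Set.univ Set.univ)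
    (h₁ : IsPerfectMatching E M₁) (h₂ : IsPerfectMatching E M₂) :
    {X : Set (F ⊕ V) | ∃ C : Set V, IsSCC E M₁ C ∧ X = sccClusterSum M₁ C} =
      {X : Set (F ⊕ V) | ∃ C : Set V, IsSCC E M₂ C ∧ X = sccClusterSum M₂ C} := by
  exact Set.Subset.antisymm (cluster_subset E M₁ M₂ h₁ h₂) (cluster_subset E M₂ M₁ h₂ h₁)
end

section
/- Let G = (V, F, E) be a finite bipartite graph with a perfect matching M, let S_F ⊆ F, set S_V = M(S_F), and let σ : S_F → S_V be any bijection. Then the intervened bipartite graph G_do(S_F, σ) has a perfect matching, and is therefore self-contained. -/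
/-! A perfect matching `M` of `G` is the graph of a bijection `m : F → V`. The map that
agrees with `σ` on `S_F` and with `m` elsewhere is still injective, because `σ` maps `S_F`
injectively into `m(S_F)`, which `m` does not hit from outside `S_F`; being an injection
between sets of equal size, it is a bijection, and its graph is a perfect matching of
`G_do(S_F, σ)`. Any perfect matching makes a graph self-contained, since the matched
partners of `S ⊆ F` are distinct elements of `N(S)`. -/

variable {F V : Type*} [Fintype F] [Fintype V] [DecidableEq F] [DecidableEq V]

/-- The adjacency set `N(S)` of a set `S ⊆ F`, restricted to the vertex set `V'`. -/
def subAdj (E : Finset (F × V)) (V' : Finset V) (S : Finset F) : Finset V :=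
  V'.filter fun v => ∃ f ∈ S, (f, v) ∈ E

/-- `S ⊆ F` is a self-contained set. -/
def SCSet (E : Finset (F × V)) (V' : Finset V) (S : Finset F) : Prop :=
  S.card = (subAdj E V' S).card ∧ ∀ S' ⊆ S, S'.card ≤ (subAdj E V' S').card

/-- The bipartite graph with equation part `F'`, variable part `V'` and edges `E`
is self-contained. -/
def SCGraph (E : Finset (F × V)) (F' : Finset F) (V' : Finset V) : Prop :=
  F'.card = V'.card ∧ SCSet E V' F'

/-- The edge set of the intervened bipartite graph `G_do(S_F, σ)`:
edges of `E` whose equation endpoint is not in `S_F`, together with the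
edges `(f, σ f)` for `f ∈ S_F`. -/
def doEdges (E : Finset (F × V)) (SF : Finset F) (σ : F → V) : Finset (F × V) :=
  E.filter (fun e => e.1 ∉ SF) ∪ SF.image fun f => (f, σ f)

section

-- Redeclared without instances, so that each lemma carries only the instances it uses.
variable {F V : Type*}

theorem Function.Injective.piecewise_of_mapsTo_image {α β : Type*} {s : Set α}
    [DecidablePred (· ∈ s)] {f g : α → β} (hg : Function.Injective g) (hf : Set.InjOn f s)
    (hfs : Set.MapsTo f s (g '' s)) : Function.Injective (s.piecewise f g) := by
  refine (Set.injective_piecewise_iff s).2 ⟨hf, hg.injOn, fun x hx y hy hxy => ?_⟩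
  obtain ⟨z, hz, hzx⟩ := hfs hx
  exact hy (hg (hzx.trans hxy) ▸ hz)

theorem IsPerfectMatching.exists_bijective {E M : Finset (F × V)}
    (hM : IsPerfectMatching E M) :
    ∃ m : F → V, Function.Bijective m ∧ ∀ e, e ∈ M ↔ e.2 = m e.1 := by
  obtain ⟨⟨-, hfst, hsnd⟩, hF, hV⟩ := hM
  choose m hm using hF
  have mem_iff : ∀ e, e ∈ M ↔ e.2 = m e.1 := by
    rintro ⟨f, v⟩
    exact ⟨fun he => congrArg Prod.snd (hfst _ he _ (hm f) rfl),
      fun (he : v = m f) => he ▸ hm f⟩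
  refine ⟨m, ⟨fun a b hab => congrArg Prod.fst (hsnd _ (hm a) _ (hm b) hab), fun v => ?_⟩,
    mem_iff⟩
  obtain ⟨f, hf⟩ := hV v
  exact ⟨f, ((mem_iff _).1 hf).symm⟩

theorem isPerfectMatching_image_graph [DecidableEq F] [DecidableEq V] [Fintype F]
    {E : Finset (F × V)} {m : F → V} (hm : Function.Bijective m) (hE : ∀ f, (f, m f) ∈ E) :
    IsPerfectMatching E (Finset.univ.image fun f => (f, m f)) := by
  have mem_iff : ∀ e, e ∈ Finset.univ.image (fun f => (f, m f)) ↔ e.2 = m e.1 := by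
    rintro ⟨f, v⟩
    simp [eq_comm]
  simp only [IsPerfectMatching, IsMatching, mem_iff]
  refine ⟨⟨fun ⟨f, v⟩ he => ?_, fun e he e' he' h => ?_, fun e he e' he' h => ?_⟩,
    fun f => ⟨m f, rfl⟩, fun v => ?_⟩
  · obtain rfl : v = m f := (mem_iff _).1 he
    exact hE f
  · exact Prod.ext h (by rw [he, he', h])
  · exact Prod.ext (hm.1 (by rw [← he, ← he', h])) h
  · obtain ⟨f, rfl⟩ := hm.2 v
    exact ⟨f, rfl⟩

theorem scGraph_univ_of_bijective [DecidableEq F] [DecidableEq V] [Fintype F] [Fintype V]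
    {E : Finset (F × V)} {m : F → V} (hm : Function.Bijective m) (hE : ∀ f, (f, m f) ∈ E) :
    SCGraph E Finset.univ Finset.univ := by
  have mem_subAdj : ∀ S : Finset F, ∀ f ∈ S, m f ∈ subAdj E Finset.univ S :=
    fun S f hf => by simpa [subAdj] using ⟨f, hf, hE f⟩
  have card_le : ∀ S : Finset F, S.card ≤ (subAdj E Finset.univ S).card := fun S =>
    Finset.card_le_card_of_injOn m (mem_subAdj S) hm.1.injOn
  have subAdj_univ : subAdj E Finset.univ Finset.univ = Finset.univ :=
    Finset.eq_univ_of_forall fun v => by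
      obtain ⟨f, rfl⟩ := hm.2 v
      exact mem_subAdj _ f (Finset.mem_univ f)
  refine ⟨?_, ?_, fun S _ => card_le S⟩ <;>
    simp only [subAdj_univ, Finset.card_univ, Fintype.card_of_bijective hm]

theorem image_snd_filter_fst_mem [DecidableEq F] [DecidableEq V] {M : Finset (F × V)}
    {m : F → V} (hM : ∀ e, e ∈ M ↔ e.2 = m e.1) (S : Finset F) :
    (M.filter fun e => e.1 ∈ S).image Prod.snd = S.image m := by
  ext v
  simp only [Finset.mem_image, Finset.mem_filter, hM]
  constructor
  · rintro ⟨⟨f, w⟩, ⟨hw, hf⟩, rfl⟩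
    exact ⟨f, hf, hw.symm⟩
  · rintro ⟨f, hf, rfl⟩
    exact ⟨(f, m f), ⟨rfl, hf⟩, rfl⟩

theorem mem_doEdges_piecewise [DecidableEq F] [DecidableEq V] {E : Finset (F × V)}
    {SF : Finset F} {σ m : F → V} (hE : ∀ f ∉ SF, (f, m f) ∈ E) (f : F) :
    (f, SF.piecewise σ m f) ∈ doEdges E SF σ := by
  by_cases hf : f ∈ SF
  · simp [doEdges, hf]
  · simp [doEdges, hf, hE f hf]

end

/-- if `M` is a perfect matching of `G = (V, F, E)`, `S_F ⊆ F`,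
`S_V = M(S_F)`, and `σ : S_F → S_V` is a bijection, then the intervened bipartite
graph `G_do(S_F, σ)` has a perfect matching, and is therefore self-contained. -/
theorem intervened_graph_selfContained (E M : Finset (F × V))
    (hM : IsPerfectMatching E M) (SF : Finset F) (σ : F → V)
    (hσ : Set.BijOn σ (SF : Set F)
      (((M.filter fun e => e.1 ∈ SF).image Prod.snd : Finset V) : Set V)) :
    (∃ M' : Finset (F × V), IsPerfectMatching (doEdges E SF σ) M') ∧
    SCGraph (doEdges E SF σ) Finset.univ Finset.univ := by
  obtain ⟨m, hm, hmM⟩ := hM.exists_bijective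
  rw [image_snd_filter_fst_mem hmM, Finset.coe_image] at hσ
  have hinj : Function.Injective (SF.piecewise σ m) := by
    rw [← Finset.piecewise_coe]
    exact hm.1.piecewise_of_mapsTo_image hσ.injOn hσ.mapsTo
  have hbij : Function.Bijective (SF.piecewise σ m) :=
    (Fintype.bijective_iff_injective_and_card _).2 ⟨hinj, Fintype.card_of_bijective hm⟩
  have hE : ∀ f, (f, SF.piecewise σ m f) ∈ doEdges E SF σ :=
    mem_doEdges_piecewise fun f _ => hM.1.1 ((hmM _).2 rfl)
  exact ⟨⟨_, isPerfectMatching_image_graph hbij hE⟩, scGraph_univ_of_bijective hbij hE⟩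
end

section
/- Let G = (V, F, E) be a finite self-contained bipartite graph with a causal-ordering decomposition (S^(1), …, S^(n)) whose clusters are C^(1), …, C^(n). Fix k ∈ {1, …, n}, set S_F = S^(k) and S_V = C^(k) ∩ V, and let σ : S_F → S_V be any bijection. Then the intervened bipartite graph G_do(S_F, σ) is self-contained, and the family of clusters of every causal-ordering decomposition of G_do(S_F, σ) equals {C^(i) : i ≠ k} ∪ {{f, σ(f)} : f ∈ S_F}; that is, performing the perfect intervention commutes with causal ordering. -/
variable {F V : Type*} [Fintype F] [Fintype V] [DecidableEq F] [DecidableEq V]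

/-- `S` is a minimal self-contained subset of `F'` (variable part `V'`). -/
def MinSCSet (E : Finset (F × V)) (F' : Finset F) (V' : Finset V) (S : Finset F) : Prop :=
  S ⊆ F' ∧ S.Nonempty ∧ SCSet E V' S ∧ ∀ S' ⊂ S, S'.Nonempty → ¬ SCSet E V' S'

/-- `S^(1) ∪ ⋯ ∪ S^(i-1)`, the union of the sets preceding index `i`. -/
def codPrev {n : ℕ} (S : Fin n → Finset F) (i : Fin n) : Finset F :=
  (Finset.univ.filter fun j => j < i).biUnion S

/-- `(S 0, …, S (n-1))` is a causal-ordering decomposition of the bipartite graph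
with edges `E` on the full vertex sets. -/
def IsCOD (E : Finset (F × V)) {n : ℕ} (S : Fin n → Finset F) : Prop :=
  Finset.univ.biUnion S = (Finset.univ : Finset F) ∧
  ∀ i : Fin n,
    MinSCSet E (Finset.univ \ codPrev S i)
      (Finset.univ \ subAdj E Finset.univ (codPrev S i)) (S i)

/-- The cluster of `S^(i)`: the pair consisting of `S^(i)` and
`N(S^(i)) \ N(S^(1) ∪ ⋯ ∪ S^(i-1))`. -/
def codCluster (E : Finset (F × V)) {n : ℕ} (S : Fin n → Finset F) (i : Fin n) :
    Finset F × Finset V :=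
  (S i, subAdj E Finset.univ (S i) \ subAdj E Finset.univ (codPrev S i))

/-!
Under Hall's condition `|S| ≤ |N(S)|` the tight sets (`|S| = |N(S)|`) are closed under union and
intersection, and the prefixes `S^(1) ∪ ⋯ ∪ S^(i)` of a causal ordering are tight. Each `S^(i)` is
then a block above `P = S^(1) ∪ ⋯ ∪ S^(i-1)`: no tight set splits it, and `N(S^(i)) \ N(P)` does
not depend on the choice of such a tight `P`. Two blocks sharing an equation coincide, so the
clusters of every causal ordering of a self-contained graph are determined by its blocks.

The intervention keeps the neighbourhood of every set between `P^(i)` and `P^(i) ∪ S^(i)` for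
`i ≠ k`: such a set either avoids `S^(k)` or contains `P^(k) ∪ S^(k)`, and `σ` maps `S^(k)` onto the
variables that `S^(k)` adds to `N(P^(k))`. The same matching preserves Hall's condition. Hence the
blocks `S^(i)`, `i ≠ k`, survive with the same variables, and every `f ∈ S^(k)` becomes the block
`{f}` above `P^(k)`, with the single variable `σ f`.
-/

open Finset

def adj (E : Finset (F × V)) (S : Finset F) : Finset V := subAdj E univ S

def IsTight (E : Finset (F × V)) (S : Finset F) : Prop := S.card = (adj E S).card

def HallCond (E : Finset (F × V)) : Prop := ∀ S : Finset F, S.card ≤ (adj E S).card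

structure IsBlock (E : Finset (F × V)) (P C : Finset F) : Prop where
  isTight_base : IsTight E P
  isTight_union : IsTight E (P ∪ C)
  disjoint : Disjoint C P
  subset_of_mem : ∀ B, IsTight E B → ∀ g ∈ C, g ∈ B → C ⊆ B

section Adjacency

omit [Fintype F]

variable {E : Finset (F × V)}

@[simp]
theorem mem_adj {S : Finset F} {v : V} : v ∈ adj E S ↔ ∃ f ∈ S, (f, v) ∈ E := by
  simp [adj, subAdj]

theorem adj_mono {S T : Finset F} (h : S ⊆ T) : adj E S ⊆ adj E T := fun v hv => by
  obtain ⟨f, hf, hfv⟩ := mem_adj.1 hv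
  exact mem_adj.2 ⟨f, h hf, hfv⟩

theorem adj_union (S T : Finset F) : adj E (S ∪ T) = adj E S ∪ adj E T := by
  ext v
  simp [or_and_right, exists_or]

theorem adj_inter_subset (S T : Finset F) : adj E (S ∩ T) ⊆ adj E S ∩ adj E T :=
  subset_inter (adj_mono inter_subset_left) (adj_mono inter_subset_right)

@[simp]
theorem adj_empty : adj E (∅ : Finset F) = ∅ := by
  ext v
  simp

theorem adj_sdiff_adj_eq_adj_union_sdiff (P C : Finset F) :
    adj E C \ adj E P = adj E (P ∪ C) \ adj E P := by
  rw [adj_union, union_sdiff_left]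

theorem subAdj_compl_adj (P S : Finset F) :
    subAdj E (univ \ adj E P) S = adj E S \ adj E P := by
  ext v
  simp only [subAdj, mem_filter, mem_sdiff, mem_univ, true_and, mem_adj]
  tauto

end Adjacency

namespace IsTight

omit [Fintype F]

variable {E : Finset (F × V)}

theorem empty : IsTight E (∅ : Finset F) := by
  simp [IsTight]

theorem union_and_inter (hall : HallCond E) {S T : Finset F} (hS : IsTight E S)
    (hT : IsTight E T) : IsTight E (S ∪ T) ∧ IsTight E (S ∩ T) := by
  -- `|N(·)|` is submodular, which squeezes both Hall inequalities into equalities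
  have hunion := hall (S ∪ T)
  have hinter := hall (S ∩ T)
  have hsub := card_le_card (adj_inter_subset (E := E) S T)
  have hadj := card_union_add_card_inter (adj E S) (adj E T)
  have hcard := card_union_add_card_inter S T
  unfold IsTight at *
  rw [adj_union] at hunion ⊢
  constructor <;> omega

theorem union (hall : HallCond E) {S T : Finset F} (hS : IsTight E S) (hT : IsTight E T) :
    IsTight E (S ∪ T) :=
  (hS.union_and_inter hall hT).1

theorem inter (hall : HallCond E) {S T : Finset F} (hS : IsTight E S) (hT : IsTight E T) :
    IsTight E (S ∩ T) :=
  (hS.union_and_inter hall hT).2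

theorem biUnion (hall : HallCond E) {ι : Type*} [DecidableEq ι] (s : Finset ι)
    {A : ι → Finset F} (hA : ∀ i ∈ s, IsTight E (A i)) : IsTight E (s.biUnion A) := by
  induction s using Finset.induction_on with
  | empty => simpa using IsTight.empty
  | insert i s _ ih =>
    rw [biUnion_insert]
    exact (hA i (mem_insert_self i s)).union hall
      (ih fun j hj => hA j (mem_insert_of_mem hj))

theorem card_sdiff_le (hall : HallCond E) {Q : Finset F} (hQ : IsTight E Q) (X : Finset F) :
    (X \ Q).card ≤ (adj E X \ adj E Q).card := by
  have hX := hall (X ∪ Q)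
  rw [← card_sdiff_add_card X Q, adj_union, ← card_sdiff_add_card (adj E X) (adj E Q)] at hX
  unfold IsTight at hQ
  omega

theorem card_adj_sdiff {P C : Finset F} (hP : IsTight E P) (hPC : IsTight E (P ∪ C))
    (hCP : Disjoint C P) : (adj E C \ adj E P).card = C.card := by
  have hadj := card_sdiff_add_card (adj E C) (adj E P)
  rw [← adj_union, union_comm] at hadj
  have hcard := card_union_of_disjoint hCP.symm
  unfold IsTight at hP hPC
  omega

theorem card_le_card_adj_sdiff (hall : HallCond E) {P C A : Finset F} (hPC : IsTight E (P ∪ C))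
    (hA : Disjoint A C) : A.card ≤ (adj E A \ (adj E C \ adj E P)).card := by
  have hout := hPC.card_sdiff_le hall A
  have hin : (A ∩ P).card ≤ (adj E A ∩ adj E P).card :=
    (hall _).trans (card_le_card (adj_inter_subset A P))
  have hsplit := card_sdiff_add_card_inter A P
  have hsplit' := card_sdiff_add_card_inter (adj E A \ (adj E C \ adj E P)) (adj E P)
  have hA' : A \ (P ∪ C) = A \ P := by
    ext f
    have : f ∈ A → f ∉ C := fun h => disjoint_left.1 hA h
    simp only [mem_sdiff, mem_union]
    tauto
  have hV : (adj E A \ (adj E C \ adj E P)) \ adj E P = adj E A \ adj E (P ∪ C) := by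
    ext v
    simp only [mem_sdiff, adj_union, mem_union]
    tauto
  have hV' : (adj E A \ (adj E C \ adj E P)) ∩ adj E P = adj E A ∩ adj E P := by
    ext v
    simp only [mem_sdiff, mem_inter]
    tauto
  rw [hA'] at hout
  rw [hV, hV'] at hsplit'
  omega

theorem scSet_compl_adj_iff (hall : HallCond E) {P C : Finset F} (hP : IsTight E P)
    (hCP : Disjoint C P) : SCSet E (univ \ adj E P) C ↔ IsTight E (P ∪ C) := by
  have hcard : (adj E C \ adj E P).card + P.card = (adj E (P ∪ C)).card := by
    rw [show P.card = (adj E P).card from hP, card_sdiff_add_card, adj_union, union_comm]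
  have hunion := card_union_of_disjoint hCP.symm
  unfold SCSet IsTight
  rw [subAdj_compl_adj]
  constructor
  · rintro ⟨hC, -⟩
    omega
  · intro hPC
    refine ⟨by omega, fun S' hS' => ?_⟩
    rw [subAdj_compl_adj]
    simpa [sdiff_eq_self_of_disjoint (disjoint_of_subset_left hS' hCP)]
      using hP.card_sdiff_le hall S'

end IsTight

theorem scGraph_univ_iff {E : Finset (F × V)} :
    SCGraph E univ univ ↔
      (univ : Finset F).card = (univ : Finset V).card ∧ IsTight E univ ∧ HallCond E :=
  ⟨fun ⟨hcard, htight, hhall⟩ => ⟨hcard, htight, fun S => hhall S (subset_univ S)⟩,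
    fun ⟨hcard, htight, hhall⟩ => ⟨hcard, htight, fun S _ => hhall S⟩⟩

section CausalOrdering

variable {n : ℕ} {S : Fin n → Finset F}

section

omit [Fintype F] [Fintype V] [DecidableEq V]

theorem codPrev_union_subset {i j : Fin n} (hji : j < i) : codPrev S j ∪ S j ⊆ codPrev S i := by
  intro f hf
  simp only [codPrev, mem_union, mem_biUnion, mem_filter, mem_univ, true_and] at hf ⊢
  rcases hf with ⟨l, hlj, hf⟩ | hf
  · exact ⟨l, hlj.trans hji, hf⟩
  · exact ⟨j, hji, hf⟩

theorem codPrev_eq_biUnion (i : Fin n) :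
    codPrev S i = (univ.filter (· < i)).biUnion fun j => codPrev S j ∪ S j := by
  refine Subset.antisymm (biUnion_mono fun _ _ => subset_union_right) (biUnion_subset.2 ?_)
  intro j hj
  exact codPrev_union_subset (mem_filter.1 hj).2

end

variable {E : Finset (F × V)}

namespace IsCOD

theorem nonempty (hS : IsCOD E S) (i : Fin n) : (S i).Nonempty :=
  (hS.2 i).2.1

theorem exists_mem (hS : IsCOD E S) (f : F) : ∃ i, f ∈ S i := by
  obtain ⟨i, -, hf⟩ := mem_biUnion.1 (hS.1 ▸ mem_univ f)
  exact ⟨i, hf⟩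

theorem disjoint_codPrev (hS : IsCOD E S) (i : Fin n) : Disjoint (S i) (codPrev S i) :=
  disjoint_left.2 fun _ hf => (mem_sdiff.1 ((hS.2 i).1 hf)).2

theorem isTight_codPrev_union (hall : HallCond E) (hS : IsCOD E S) (i : Fin n) :
    IsTight E (codPrev S i ∪ S i) := by
  induction i using WellFoundedLT.induction with
  | _ i ih =>
    have hP : IsTight E (codPrev S i) := by
      rw [codPrev_eq_biUnion]
      exact IsTight.biUnion hall _ fun j hj => ih j (mem_filter.1 hj).2
    exact (hP.scSet_compl_adj_iff hall (hS.disjoint_codPrev i)).1 (hS.2 i).2.2.1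

theorem isTight_codPrev (hall : HallCond E) (hS : IsCOD E S) (i : Fin n) :
    IsTight E (codPrev S i) := by
  rw [codPrev_eq_biUnion]
  exact IsTight.biUnion hall _ fun j _ => hS.isTight_codPrev_union hall j

/-- A tight set meeting `S i` can be cut down to a self-contained subset `B ∩ S i` of the residual
graph, so minimality of `S i` forces `S i ⊆ B`. -/
theorem isBlock (hall : HallCond E) (hS : IsCOD E S) (i : Fin n) :
    IsBlock E (codPrev S i) (S i) where
  isTight_base := hS.isTight_codPrev hall i
  isTight_union := hS.isTight_codPrev_union hall i
  disjoint := hS.disjoint_codPrev i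
  subset_of_mem B hB g hg hgB := by
    have hP := hS.isTight_codPrev hall i
    have hcut : IsTight E (codPrev S i ∪ B ∩ S i) := by
      have h := ((hB.union hall hP).inter hall (hS.isTight_codPrev_union hall i))
      rwa [union_comm B, ← union_inter_distrib_left] at h
    have hsc := (hP.scSet_compl_adj_iff hall
      (disjoint_of_subset_left inter_subset_right (hS.disjoint_codPrev i))).2 hcut
    have heq : B ∩ S i = S i := by
      by_contra hne
      exact (hS.2 i).2.2.2 _ (ssubset_of_subset_of_ne inter_subset_right hne)
        ⟨g, mem_inter.2 ⟨hgB, hg⟩⟩ hsc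
    exact heq ▸ inter_subset_left

end IsCOD

end CausalOrdering

namespace IsBlock

variable {E : Finset (F × V)} {P C P' C' : Finset F}

section

omit [Fintype F]

theorem subset_of_mem_of_mem (h : IsBlock E P C) (h' : IsBlock E P' C') {f : F} (hf : f ∈ C)
    (hf' : f ∈ C') : C ⊆ C' := by
  intro g hg
  have hgP'C' := h.subset_of_mem _ h'.isTight_union f hf (mem_union_right _ hf') hg
  refine (mem_union.1 hgP'C').resolve_left fun hgP' => ?_
  exact disjoint_left.1 h'.disjoint hf' (h.subset_of_mem _ h'.isTight_base g hg hgP' hf)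

theorem eq_of_mem (h : IsBlock E P C) (h' : IsBlock E P' C') {f : F} (hf : f ∈ C)
    (hf' : f ∈ C') : C = C' :=
  Subset.antisymm (h.subset_of_mem_of_mem h' hf hf') (h'.subset_of_mem_of_mem h hf' hf)

theorem inter_base (hall : HallCond E) (h : IsBlock E P C) (h' : IsBlock E P' C) :
    IsBlock E (P ∩ P') C where
  isTight_base := h.isTight_base.inter hall h'.isTight_base
  isTight_union := by
    rw [union_comm, union_inter_distrib_left, union_comm C, union_comm C]
    exact h.isTight_union.inter hall h'.isTight_union
  disjoint := disjoint_of_subset_right inter_subset_left h.disjoint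
  subset_of_mem := h.subset_of_mem

theorem adj_sdiff_eq_of_subset (h : IsBlock E P C) (h' : IsBlock E P' C) (hP : P' ⊆ P) :
    adj E C \ adj E P = adj E C \ adj E P' :=
  eq_of_subset_of_card_le (sdiff_subset_sdiff subset_rfl (adj_mono hP))
    (by rw [h.isTight_base.card_adj_sdiff h.isTight_union h.disjoint,
      h'.isTight_base.card_adj_sdiff h'.isTight_union h'.disjoint])

theorem adj_sdiff_eq (hall : HallCond E) (h : IsBlock E P C) (h' : IsBlock E P' C) :
    adj E C \ adj E P = adj E C \ adj E P' := by
  rw [h.adj_sdiff_eq_of_subset (h.inter_base hall h') inter_subset_left,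
    h'.adj_sdiff_eq_of_subset (h.inter_base hall h') inter_subset_right]

end

theorem codCluster_eq (hall : HallCond E) {m : ℕ} {T : Fin m → Finset F} (hT : IsCOD E T)
    (h : IsBlock E P C) {f : F} {j : Fin m} (hfC : f ∈ C) (hfT : f ∈ T j) :
    codCluster E T j = (C, adj E C \ adj E P) := by
  have hTj := hT.isBlock hall j
  have hC : T j = C := hTj.eq_of_mem h hfT hfC
  rw [hC] at hTj
  change (T j, adj E (T j) \ adj E (codPrev T j)) = _
  rw [hC, hTj.adj_sdiff_eq hall h]

end IsBlock

section Intervention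

omit [Fintype F]

variable {E : Finset (F × V)} {SF : Finset F} {σ : F → V}

theorem adj_doEdges (X : Finset F) :
    adj (doEdges E SF σ) X = adj E (X \ SF) ∪ (X ∩ SF).image σ := by
  ext v
  simp only [mem_adj, doEdges, mem_union, mem_filter, mem_image, mem_sdiff, mem_inter,
    Prod.mk.injEq]
  constructor
  · rintro ⟨f, hf, ⟨hE, hfSF⟩ | ⟨g, hg, rfl, rfl⟩⟩
    · exact Or.inl ⟨f, ⟨hf, hfSF⟩, hE⟩
    · exact Or.inr ⟨g, ⟨hf, hg⟩, rfl⟩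
  · rintro (⟨f, ⟨hf, hfSF⟩, hE⟩ | ⟨g, ⟨hg, hgSF⟩, rfl⟩)
    · exact ⟨f, hf, Or.inl ⟨hE, hfSF⟩⟩
    · exact ⟨g, hg, Or.inr ⟨g, hgSF, rfl, rfl⟩⟩

theorem adj_doEdges_of_disjoint {X : Finset F} (h : Disjoint X SF) :
    adj (doEdges E SF σ) X = adj E X := by
  rw [adj_doEdges, sdiff_eq_self_of_disjoint h, disjoint_iff_inter_eq_empty.1 h, image_empty,
    union_empty]

theorem adj_doEdges_singleton {f : F} (hf : f ∈ SF) : adj (doEdges E SF σ) {f} = {σ f} := by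
  rw [adj_doEdges, sdiff_eq_empty_iff_subset.2 (singleton_subset_iff.2 hf), adj_empty,
    inter_eq_left.2 (singleton_subset_iff.2 hf), image_singleton, empty_union]

/-- The new edges of `SF` go to `N(SF) \ N(P)`, and the rest of `N(SF)` is already in `N(P)`,
which `X \ SF` still covers. -/
theorem adj_doEdges_of_subset {P X : Finset F} (himg : SF.image σ = adj E SF \ adj E P)
    (hPSF : Disjoint P SF) (hPX : P ⊆ X) (hSFX : SF ⊆ X) :
    adj (doEdges E SF σ) X = adj E X := by
  have hP : adj E P ⊆ adj E (X \ SF) := adj_mono (subset_sdiff.2 ⟨hPX, hPSF⟩)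
  rw [adj_doEdges, inter_eq_right.2 hSFX, himg]
  conv_rhs => rw [← sdiff_union_of_subset hSFX, adj_union]
  ext v
  have := @hP v
  simp only [mem_union, mem_sdiff]
  tauto

theorem hallCond_doEdges (hall : HallCond E) {P : Finset F} (hPSF : IsTight E (P ∪ SF))
    (hinj : Set.InjOn σ SF) (hmaps : Set.MapsTo σ SF (adj E SF \ adj E P : Finset V)) :
    HallCond (doEdges E SF σ) := by
  intro X
  have hout : (X \ SF).card ≤ (adj E (X \ SF) \ (adj E SF \ adj E P)).card :=
    hPSF.card_le_card_adj_sdiff hall sdiff_disjoint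
  have hin : ((X ∩ SF).image σ).card = (X ∩ SF).card :=
    card_image_of_injOn (hinj.mono (by simp))
  have hdisj : Disjoint (adj E (X \ SF) \ (adj E SF \ adj E P)) ((X ∩ SF).image σ) := by
    refine disjoint_right.2 fun v hv hv' => (mem_sdiff.1 hv').2 ?_
    obtain ⟨f, hf, rfl⟩ := mem_image.1 hv
    exact mem_coe.1 (hmaps (mem_coe.2 (mem_inter.1 hf).2))
  calc X.card = (X \ SF).card + (X ∩ SF).card := (card_sdiff_add_card_inter X SF).symm
    _ ≤ (adj E (X \ SF) \ (adj E SF \ adj E P) ∪ (X ∩ SF).image σ).card := by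
      rw [card_union_of_disjoint hdisj]
      omega
    _ ≤ (adj (doEdges E SF σ) X).card := by
      rw [adj_doEdges]
      exact card_le_card (union_subset_union sdiff_subset subset_rfl)

end Intervention

section InterventionOnCluster

variable {E : Finset (F × V)} {n : ℕ} {S : Fin n → Finset F} {k : Fin n} {σ : F → V}
  {m : ℕ} {T : Fin m → Finset F}

theorem adj_doEdges_of_ne (hS : IsCOD E S)
    (himg : (S k).image σ = adj E (S k) \ adj E (codPrev S k)) {i : Fin n} (hik : i ≠ k)
    {X : Finset F} (hPX : codPrev S i ⊆ X) (hX : X ⊆ codPrev S i ∪ S i) :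
    adj (doEdges E (S k) σ) X = adj E X := by
  rcases hik.lt_or_gt with hik | hki
  · exact adj_doEdges_of_disjoint (disjoint_of_subset_left
      (hX.trans (codPrev_union_subset hik)) (hS.disjoint_codPrev k).symm)
  · have hsub := codPrev_union_subset (S := S) hki
    exact adj_doEdges_of_subset himg (hS.disjoint_codPrev k).symm
      ((subset_union_left.trans hsub).trans hPX) ((subset_union_right.trans hsub).trans hPX)

theorem isTight_doEdges_iff_of_ne (hS : IsCOD E S)
    (himg : (S k).image σ = adj E (S k) \ adj E (codPrev S k)) {i : Fin n} (hik : i ≠ k)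
    {X : Finset F} (hPX : codPrev S i ⊆ X) (hX : X ⊆ codPrev S i ∪ S i) :
    IsTight (doEdges E (S k) σ) X ↔ IsTight E X := by
  unfold IsTight
  rw [adj_doEdges_of_ne hS himg hik hPX hX]

/-- A tight set `B` of the intervened graph meeting `S i` gives the tight set
`(B ∪ P) ∩ (P ∪ S i)` of the original graph, which must contain `S i`. -/
theorem isBlock_doEdges_of_ne (hall : HallCond E) (hallDo : HallCond (doEdges E (S k) σ))
    (hS : IsCOD E S) (himg : (S k).image σ = adj E (S k) \ adj E (codPrev S k)) {i : Fin n}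
    (hik : i ≠ k) : IsBlock (doEdges E (S k) σ) (codPrev S i) (S i) := by
  have hblock := hS.isBlock hall i
  have hP := (isTight_doEdges_iff_of_ne hS himg hik subset_rfl subset_union_left).2
    hblock.isTight_base
  have hPS := (isTight_doEdges_iff_of_ne hS himg hik subset_union_left subset_rfl).2
    hblock.isTight_union
  refine ⟨hP, hPS, hblock.disjoint, fun B hB g hg hgB => ?_⟩
  have hcut := (isTight_doEdges_iff_of_ne hS himg hik
    (subset_inter subset_union_right subset_union_left) inter_subset_right).1
    ((hB.union hallDo hP).inter hallDo hPS)
  intro x hx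
  have hx' := hblock.subset_of_mem _ hcut g hg
    (mem_inter.2 ⟨mem_union_left _ hgB, mem_union_right _ hg⟩) hx
  exact (mem_union.1 (mem_inter.1 hx').1).resolve_right (disjoint_left.1 hblock.disjoint hx)

theorem isBlock_doEdges_singleton (hall : HallCond E) (hS : IsCOD E S)
    (himg : (S k).image σ = adj E (S k) \ adj E (codPrev S k)) {f : F} (hf : f ∈ S k) :
    IsBlock (doEdges E (S k) σ) (codPrev S k) {f} := by
  have hPk := (hS.disjoint_codPrev k).symm
  have hfP : f ∉ codPrev S k := disjoint_left.1 (hS.disjoint_codPrev k) hf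
  have hσf : σ f ∉ adj E (codPrev S k) :=
    (mem_sdiff.1 (himg ▸ mem_image_of_mem σ hf)).2
  have hadjP : adj (doEdges E (S k) σ) (codPrev S k) = adj E (codPrev S k) :=
    adj_doEdges_of_disjoint hPk
  refine ⟨?_, ?_, disjoint_singleton_left.2 hfP, ?_⟩
  · unfold IsTight
    rw [hadjP]
    exact hS.isTight_codPrev hall k
  · have hP := hS.isTight_codPrev hall k
    unfold IsTight at hP ⊢
    rw [adj_union, hadjP, adj_doEdges_singleton hf,
      card_union_of_disjoint (disjoint_singleton_right.2 hfP),
      card_union_of_disjoint (disjoint_singleton_right.2 hσf), card_singleton, card_singleton, hP]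
  · rintro B - g hg hgB
    rw [mem_singleton.1 hg] at hgB
    exact singleton_subset_iff.2 hgB

theorem codCluster_doEdges_of_ne (hall : HallCond E) (hallDo : HallCond (doEdges E (S k) σ))
    (hS : IsCOD E S) (himg : (S k).image σ = adj E (S k) \ adj E (codPrev S k))
    (hT : IsCOD (doEdges E (S k) σ) T) {f : F} {i : Fin n} {j : Fin m} (hik : i ≠ k)
    (hfS : f ∈ S i) (hfT : f ∈ T j) :
    codCluster (doEdges E (S k) σ) T j = codCluster E S i := by
  rw [(isBlock_doEdges_of_ne hall hallDo hS himg hik).codCluster_eq hallDo hT hfS hfT,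
    adj_sdiff_adj_eq_adj_union_sdiff,
    adj_doEdges_of_ne hS himg hik subset_union_left subset_rfl,
    adj_doEdges_of_ne hS himg hik subset_rfl subset_union_left,
    ← adj_sdiff_adj_eq_adj_union_sdiff]
  rfl

theorem codCluster_doEdges_of_mem (hall : HallCond E) (hallDo : HallCond (doEdges E (S k) σ))
    (hS : IsCOD E S) (himg : (S k).image σ = adj E (S k) \ adj E (codPrev S k))
    (hT : IsCOD (doEdges E (S k) σ) T) {f : F} {j : Fin m} (hfS : f ∈ S k) (hfT : f ∈ T j) :
    codCluster (doEdges E (S k) σ) T j = ({f}, {σ f}) := by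
  rw [(isBlock_doEdges_singleton hall hS himg hfS).codCluster_eq hallDo hT (mem_singleton_self f)
    hfT, adj_doEdges_singleton hfS, adj_doEdges_of_disjoint (hS.disjoint_codPrev k).symm,
    sdiff_eq_self_of_disjoint (disjoint_singleton_left.2
      (mem_sdiff.1 (himg ▸ mem_image_of_mem σ hfS)).2)]

end InterventionOnCluster

/-- performing a perfect intervention on a cluster commutes with
causal ordering.  Let `(S 0, …, S (n-1))` be a causal-ordering decomposition of a
finite self-contained bipartite graph `G` with clusters `C^(i) = codCluster E S i`,
fix `k`, set `S_F = S k` and `S_V = C^(k) ∩ V`, and let `σ : S_F → S_V` be a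
bijection.  Then the intervened graph `G_do(S_F, σ)` is self-contained, and the
family of clusters of every causal-ordering decomposition of `G_do(S_F, σ)` equals
`{C^(i) : i ≠ k} ∪ {{f, σ f} : f ∈ S_F}`. -/
theorem intervention_commutes_with_causal_ordering (E : Finset (F × V))
    (hG : SCGraph E Finset.univ Finset.univ)
    {n : ℕ} (S : Fin n → Finset F) (hS : IsCOD E S) (k : Fin n) (σ : F → V)
    (hσ : Set.BijOn σ ((S k : Finset F) : Set F)
      (((codCluster E S k).2 : Finset V) : Set V)) :
    SCGraph (doEdges E (S k) σ) Finset.univ Finset.univ ∧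
    ∀ {m : ℕ} (T : Fin m → Finset F), IsCOD (doEdges E (S k) σ) T →
      Set.range (codCluster (doEdges E (S k) σ) T) =
        {p : Finset F × Finset V | ∃ i : Fin n, i ≠ k ∧ p = codCluster E S i} ∪
          {p : Finset F × Finset V | ∃ f ∈ S k, p = ({f}, {σ f})} := by
  obtain ⟨hcard, htight, hall⟩ := scGraph_univ_iff.1 hG
  have himg : (S k).image σ = adj E (S k) \ adj E (codPrev S k) :=
    coe_injective (by rw [coe_image, hσ.image_eq]; rfl)
  have hallDo := hallCond_doEdges hall (hS.isTight_codPrev_union hall k) hσ.injOn hσ.mapsTo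
  have htightDo : IsTight (doEdges E (S k) σ) univ := by
    unfold IsTight
    rw [adj_doEdges_of_subset himg (hS.disjoint_codPrev k).symm (subset_univ _) (subset_univ _)]
    exact htight
  refine ⟨scGraph_univ_iff.2 ⟨hcard, htightDo, hallDo⟩, fun T hT => Set.ext fun p => ⟨?_, ?_⟩⟩
  · rintro ⟨j, rfl⟩
    obtain ⟨f, hfT⟩ := hT.nonempty j
    obtain ⟨i, hfS⟩ := hS.exists_mem f
    by_cases hik : i = k
    · subst hik
      exact Or.inr ⟨f, hfS, codCluster_doEdges_of_mem hall hallDo hS himg hT hfS hfT⟩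
    · exact Or.inl ⟨i, hik, codCluster_doEdges_of_ne hall hallDo hS himg hT hik hfS hfT⟩
  · rintro (⟨i, hik, rfl⟩ | ⟨f, hfS, rfl⟩)
    · obtain ⟨f, hfS⟩ := hS.nonempty i
      obtain ⟨j, hfT⟩ := hT.exists_mem f
      exact ⟨j, codCluster_doEdges_of_ne hall hallDo hS himg hT hik hfS hfT⟩
    · obtain ⟨j, hfT⟩ := hT.exists_mem f
      exact ⟨j, codCluster_doEdges_of_mem hall hallDo hS himg hT hfS hfT⟩
end
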